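/- arXiv:1108.2518 — 2 statements merged into one kernel-verified Lean document; each statement's English description precedes it below -/
import Mathlib

section
/- Two rotations r₁, r₂ in a plane crystallographic group Γ (acting faithfully, discretely, and cocompactly on ℝ² by orientation-preserving isometries) generate a finite cyclic subgroup consisting of rotations if and only if some nontrivial powers r₁^p and r₂^q commute. -/
/-!
A rotation `p ↦ R p + v` with `R ∈ SO(2)`, `R ≠ 1` has exactly one fixed point, since `1 - R` is
invertible. If nontrivial powers `r₁ ^ p` and `r₂ ^ q` commute, then `r₂ ^ q` maps the fixed point
of `r₁ ^ p` to a fixed point of `r₁ ^ p`, so both powers, and hence `r₁` and `r₂`, fix one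
common point `c`. The group `⟨r₁, r₂⟩` then lies in the stabilizer of `c`, which is finite by
discreteness, and on which the linear part is injective and lands in the circle group `SO(2) ≅ U(1)`;
a finite subgroup of `ℂˣ` is cyclic. Conversely a cyclic group is abelian, so `r₁` and `r₂` commute.
-/

open Matrix Real

abbrev V2 := Fin 2 → ℝ
abbrev Mat2 := Matrix (Fin 2) (Fin 2) ℝ
abbrev OG2 := Matrix.orthogonalGroup (Fin 2) ℝ

/-- The Euclidean group of the plane, as pairs `(v, R)` acting by `p ↦ R p + v`. -/
@[ext] structure E2 where
  v : V2
  R : OG2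

namespace E2

instance : Mul E2 := ⟨fun a b => ⟨a.v + (a.R : Mat2).mulVec b.v, a.R * b.R⟩⟩
instance : One E2 := ⟨⟨0, 1⟩⟩
instance : Inv E2 := ⟨fun a => ⟨-((a.R⁻¹ : OG2) : Mat2).mulVec a.v, a.R⁻¹⟩⟩

@[simp] lemma mul_v (a b : E2) : (a * b).v = a.v + (a.R : Mat2).mulVec b.v := rfl
@[simp] lemma mul_R (a b : E2) : (a * b).R = a.R * b.R := rfl
@[simp] lemma one_v : (1 : E2).v = 0 := rfl
@[simp] lemma one_R : (1 : E2).R = 1 := rfl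
@[simp] lemma inv_R (a : E2) : (a⁻¹).R = a.R⁻¹ := rfl
@[simp] lemma inv_v (a : E2) : (a⁻¹).v = -((a.R⁻¹ : OG2) : Mat2).mulVec a.v := rfl

noncomputable instance : Group E2 where
  mul_assoc a b c := by
    ext : 1
    · simp only [mul_v, mul_R, Matrix.mulVec_add, add_assoc, Matrix.mulVec_mulVec, Submonoid.coe_mul]
    · simp [mul_assoc]
  one_mul a := by ext <;> simp
  mul_one a := by ext <;> simp
  inv_mul_cancel a := by
    ext : 1
    · simp only [mul_v, inv_v, inv_R, one_v, Matrix.mulVec_mulVec, ← Submonoid.coe_mul, inv_mul_cancel,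
        Matrix.mulVec_neg, Submonoid.coe_one, Matrix.one_mulVec, neg_add_cancel]
    · simp

/-- Rotation matrix through angle `θ`. -/
noncomputable def rotM (θ : ℝ) : Mat2 := !![Real.cos θ, -Real.sin θ; Real.sin θ, Real.cos θ]

lemma rotM_mem (θ : ℝ) : rotM θ ∈ Matrix.orthogonalGroup (Fin 2) ℝ := by
  rw [Matrix.mem_orthogonalGroup_iff]
  have h := Real.sin_sq_add_cos_sq θ
  ext i j
  fin_cases i <;> fin_cases j <;>
    simp [rotM, Matrix.mul_apply, Fin.sum_univ_succ, Matrix.one_apply] <;> nlinarith [h]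

/-- Rotation through `θ` as an element of `O(2)`. -/
noncomputable def rotOG (θ : ℝ) : OG2 := ⟨rotM θ, rotM_mem θ⟩

/-- Translation by `w` as a Euclidean isometry. -/
noncomputable def transE (w : V2) : E2 := ⟨w, 1⟩

/-- Rotation about the origin through `θ` as a Euclidean isometry. -/
noncomputable def rotE (θ : ℝ) : E2 := ⟨0, rotOG θ⟩

/-- An element of the Euclidean group is a rotation (has nontrivial linear part). -/
def isRot (g : E2) : Prop := ((g.R : Mat2) ≠ 1)

/-- The subgroup of translations. -/
noncomputable def transSub : Subgroup E2 where
  carrier := {g | (g.R : Mat2) = 1}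
  one_mem' := by simp
  mul_mem' := by
    intro a b ha hb
    simp only [Set.mem_setOf_eq] at *
    simp [ha, hb]
  inv_mem' := by
    intro a ha
    simp only [Set.mem_setOf_eq] at *
    have : a.R = 1 := Subtype.ext ha
    simp [this]

/-- The crystallographic group `Γ_k`, realized inside the Euclidean group:
generated by the unit translations and the rotation through `2π/k`
(for `k = 2` both translation generators are needed). -/
noncomputable def GammaK (k : ℕ) : Subgroup E2 :=
  Subgroup.closure ({transE ![1, 0], rotE (2 * Real.pi / k)} ∪
    (if k = 2 then {transE ![0, 1]} else ∅))

/-- The standard action of the Euclidean group on the plane. -/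
noncomputable def act (g : E2) (p : V2) : V2 := (g.R : Mat2).mulVec p + g.v

end E2

lemma Matrix.isUnit_one_sub_of_mem_specialOrthogonalGroup_fin_two {K : Type*} [Field K]
    [NeZero (2 : K)] {M : Matrix (Fin 2) (Fin 2) K} (hM : M ∈ specialOrthogonalGroup (Fin 2) K) (hne : M ≠ 1) :
    IsUnit (1 - M) := by
  obtain ⟨hd, hb, hsq⟩ := mem_specialOrthogonalGroup_fin_two_iff.mp hM
  have ha : M 0 0 ≠ 1 := by
    intro ha
    have hb0 : M 0 1 = 0 :=
      pow_eq_zero_iff two_ne_zero |>.mp (by linear_combination hsq - (M 0 0 + 1) * ha)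
    have hc0 : M 1 0 = 0 := by linear_combination hb - hb0
    apply hne
    ext i j
    fin_cases i <;> fin_cases j <;> simp [ha, ← hd, hb0, hc0]
  have hdet : (1 - M).det = 2 * (1 - M 0 0) := by
    simp only [det_fin_two, Matrix.sub_apply, one_apply_eq, one_apply_ne zero_ne_one,
      one_apply_ne one_ne_zero, ← hd]
    linear_combination hsq - M 0 1 * hb
  rw [isUnit_iff_isUnit_det, hdet, isUnit_iff_ne_zero]
  exact mul_ne_zero two_ne_zero (sub_ne_zero.mpr ha.symm)

namespace E2

open MulAction Subgroup

noncomputable instance : MulAction E2 V2 where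
  smul := act
  one_smul p := show act 1 p = p by simp [act]
  mul_smul g h p := show act (g * h) p = act g (act h p) by
    simp only [act, mul_R, mul_v, Submonoid.coe_mul, mulVec_add, mulVec_mulVec]
    abel

lemma smul_def (g : E2) (p : V2) : g • p = act g p := rfl

lemma smul_eq_self_iff {g : E2} {c : V2} : g • c = c ↔ (1 - (g.R : Mat2)) *ᵥ c = g.v := by
  rw [smul_def, act, sub_mulVec, one_mulVec, sub_eq_iff_eq_add', eq_comm]

lemma eq_of_R_eq_of_smul_eq_self {g h : E2} {c : V2} (hg : g • c = c) (hh : h • c = c)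
    (hR : g.R = h.R) : g = h := by
  rw [smul_eq_self_iff] at hg hh
  exact E2.ext (by rw [← hg, ← hh, hR]) hR

lemma isRot_of_smul_eq_self {g : E2} {c : V2} (hc : g • c = c) (hg : g ≠ 1) : isRot g :=
  fun hR => hg (eq_of_R_eq_of_smul_eq_self hc (one_smul E2 c) (Subtype.ext hR))

def orientationPreserving : Subgroup E2 where
  carrier := {g | (g.R : Mat2).det = 1}
  one_mem' := det_one
  mul_mem' {g h} hg hh := by simp_all [det_mul]
  inv_mem' {g} hg := by
    simpa [star_eq_conjTranspose, det_conjTranspose] using hg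

lemma R_mem_specialOrthogonalGroup {g : E2} (hg : g ∈ orientationPreserving) :
    (g.R : Mat2) ∈ specialOrthogonalGroup (Fin 2) ℝ :=
  ⟨g.R.2, hg⟩

lemma existsUnique_smul_eq_self {g : E2} (hg : g ∈ orientationPreserving) (hrot : isRot g) :
    ∃! c : V2, g • c = c := by
  have hu := isUnit_one_sub_of_mem_specialOrthogonalGroup_fin_two (R_mem_specialOrthogonalGroup hg) hrot
  simp_rw [smul_eq_self_iff]
  obtain ⟨c, hc⟩ := mulVec_surjective_iff_isUnit.mpr hu g.v
  exact ⟨c, hc, fun c' hc' => mulVec_injective_iff_isUnit.mpr hu (hc'.trans hc.symm)⟩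

lemma smul_eq_self_of_commute {g h : E2} {c : V2} (hg : g ∈ orientationPreserving)
    (hrot : isRot g) (hc : g • c = c) (hgh : Commute g h) : h • c = c :=
  (existsUnique_smul_eq_self hg hrot).unique (by rw [← mul_smul, hgh.eq, mul_smul, hc]) hc

lemma exists_smul_eq_self_of_commute_pow {r₁ r₂ : E2} (h₁ : r₁ ∈ orientationPreserving)
    (h₂ : r₂ ∈ orientationPreserving) (hrot₁ : isRot r₁) (hrot₂ : isRot r₂) {p q : ℕ}
    (hp : r₁ ^ p ≠ 1) (hq : r₂ ^ q ≠ 1) (hcomm : Commute (r₁ ^ p) (r₂ ^ q)) :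
    ∃ c : V2, r₁ • c = c ∧ r₂ • c = c := by
  obtain ⟨c, hc, -⟩ := existsUnique_smul_eq_self h₁ hrot₁
  obtain ⟨c₂, hc₂, -⟩ := existsUnique_smul_eq_self h₂ hrot₂
  have hc₁p : r₁ ^ p ∈ stabilizer E2 c := pow_mem hc p
  have hc₂q : r₂ ^ q ∈ stabilizer E2 c₂ := pow_mem hc₂ q
  have hcq : r₂ ^ q • c = c :=
    smul_eq_self_of_commute (pow_mem h₁ p) (isRot_of_smul_eq_self hc₁p hp) hc₁p hcomm
  have hc₂c : c₂ = c := (existsUnique_smul_eq_self (pow_mem h₂ q)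
    (isRot_of_smul_eq_self hc₂q hq)).unique hc₂q hcq
  exact ⟨c, hc, hc₂c ▸ hc₂⟩

/-- The linear part `!![a, -b; b, a]` of an orientation-preserving isometry, as `a + b i`. -/
noncomputable def linearPartToComplex : orientationPreserving →* ℂ where
  toFun g := ⟨(g.1.R : Mat2) 0 0, (g.1.R : Mat2) 1 0⟩
  map_one' := by simp [Complex.ext_iff]
  map_mul' g h := by
    obtain ⟨hd, hb, -⟩ := mem_specialOrthogonalGroup_fin_two_iff.mp (R_mem_specialOrthogonalGroup g.2)
    apply Complex.ext <;>
      simp only [coe_mul, mul_R, Submonoid.coe_mul, mul_apply, Fin.sum_univ_two, ← hd, hb,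
        Complex.mul_re, Complex.mul_im] <;> ring

lemma R_eq_of_linearPartToComplex_eq {g h : orientationPreserving}
    (hgh : linearPartToComplex g = linearPartToComplex h) : g.1.R = h.1.R := by
  obtain ⟨hdg, hbg, -⟩ := mem_specialOrthogonalGroup_fin_two_iff.mp (R_mem_specialOrthogonalGroup g.2)
  obtain ⟨hdh, hbh, -⟩ := mem_specialOrthogonalGroup_fin_two_iff.mp (R_mem_specialOrthogonalGroup h.2)
  obtain ⟨h00, h10⟩ := Complex.ext_iff.mp hgh
  ext i j
  fin_cases i <;> fin_cases j <;> simp_all [linearPartToComplex]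

lemma isCyclic_of_le_stabilizer {H : Subgroup E2} [Finite H] (hH : H ≤ orientationPreserving)
    {c : V2} (hc : H ≤ stabilizer E2 c) : IsCyclic H :=
  isCyclic_of_injective_ringHom (linearPartToComplex.comp (inclusion hH)) fun g h hgh =>
    Subtype.ext (eq_of_R_eq_of_smul_eq_self (hc g.2) (hc h.2) (R_eq_of_linearPartToComplex_eq hgh))

end E2

open E2 in
theorem rotations_generate_finite_cyclic_iff_powers_commute_general
    (Γ : Subgroup E2)
    (horient : ∀ g ∈ Γ, ((g.R : Mat2)).det = 1)
    (hdiscrete : ∀ K : Set V2, IsCompact K →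
      {g : E2 | g ∈ Γ ∧ (act g '' K ∩ K).Nonempty}.Finite)
    (r₁ r₂ : E2) (h₁ : r₁ ∈ Γ) (h₂ : r₂ ∈ Γ) (hrot₁ : isRot r₁) (hrot₂ : isRot r₂) :
    (((Subgroup.closure {r₁, r₂} : Subgroup E2) : Set E2).Finite ∧
      IsCyclic (Subgroup.closure {r₁, r₂} : Subgroup E2) ∧
      (∀ g ∈ Subgroup.closure {r₁, r₂}, g ≠ 1 → isRot g)) ↔
    ∃ p q : ℕ, r₁ ^ p ≠ 1 ∧ r₂ ^ q ≠ 1 ∧ Commute (r₁ ^ p) (r₂ ^ q) := by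
  set H := Subgroup.closure {r₁, r₂}
  constructor
  · rintro ⟨-, hcyc, -⟩
    have hne₁ : r₁ ≠ 1 := by rintro rfl; exact hrot₁ rfl
    have hne₂ : r₂ ≠ 1 := by rintro rfl; exact hrot₂ rfl
    refine ⟨1, 1, by rwa [pow_one], by rwa [pow_one], ?_⟩
    rw [pow_one, pow_one]
    exact setLike_mul_comm (Subgroup.subset_closure (by simp) : r₁ ∈ H)
      (Subgroup.subset_closure (by simp) : r₂ ∈ H)
  · rintro ⟨p, q, hp, hq, hcomm⟩
    obtain ⟨c, hc₁, hc₂⟩ := exists_smul_eq_self_of_commute_pow (horient r₁ h₁) (horient r₂ h₂)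
      hrot₁ hrot₂ hp hq hcomm
    have hΓ : H ≤ Γ := (Subgroup.closure_le _).mpr (Set.pair_subset h₁ h₂)
    have hstab : H ≤ MulAction.stabilizer E2 c :=
      (Subgroup.closure_le _).mpr (Set.pair_subset hc₁ hc₂)
    have hfin : (H : Set E2).Finite :=
      (hdiscrete {c} isCompact_singleton).subset fun g hg => ⟨hΓ hg, c, ⟨c, rfl, hstab hg⟩, rfl⟩
    have := hfin.to_subtype
    exact ⟨hfin, isCyclic_of_le_stabilizer (fun g hg => horient g (hΓ hg)) hstab,
      fun g hg hne => isRot_of_smul_eq_self (hstab hg) hne⟩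

open E2 in
/-- **Lemma (rotscomm).** Let `Γ` be a plane crystallographic group: a subgroup of the
orientation-preserving Euclidean group acting faithfully, properly discontinuously
(discretely) and cocompactly on `ℝ²`.  Two rotations `r₁, r₂ ∈ Γ` generate a finite
cyclic subgroup consisting of rotations if and only if some nontrivial powers
`r₁^p` and `r₂^q` commute. -/
theorem rotations_generate_finite_cyclic_iff_powers_commute
    (Γ : Subgroup E2)
    (horient : ∀ g ∈ Γ, ((g.R : Mat2)).det = 1)
    (hfaithful : ∀ g ∈ Γ, (∀ p : V2, act g p = p) → g = 1)
    (hdiscrete : ∀ K : Set V2, IsCompact K →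
      {g : E2 | g ∈ Γ ∧ (act g '' K ∩ K).Nonempty}.Finite)
    (hcocompact : ∃ K : Set V2, IsCompact K ∧ (⋃ g ∈ Γ, act g '' K) = Set.univ)
    (r₁ r₂ : E2) (h₁ : r₁ ∈ Γ) (h₂ : r₂ ∈ Γ) (hrot₁ : isRot r₁) (hrot₂ : isRot r₂) :
    (((Subgroup.closure {r₁, r₂} : Subgroup E2) : Set E2).Finite ∧
      IsCyclic (Subgroup.closure {r₁, r₂} : Subgroup E2) ∧
      (∀ g ∈ Subgroup.closure {r₁, r₂}, g ≠ 1 → isRot g)) ↔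
    ∃ p q : ℕ, r₁ ^ p ≠ 1 ∧ r₂ ^ q ≠ 1 ∧ Commute (r₁ ^ p) (r₂ ^ q) :=
  rotations_generate_finite_cyclic_iff_powers_commute_general Γ horient hdiscrete r₁ r₂ h₁ h₂ hrot₁
    hrot₂
end

section
/- Let E be a (possibly infinite) set and f a non-negative, monotone, submodular, integer-valued function on finite subsets of E with f(∅) = 0 such that f(A ∪ {x}) − f(A) ∈ {0,1} for all finite A and x ∉ A. Then the collection of finite subsets A ⊆ E with |A'| ≤ f(A') for all A' ⊆ A forms the independent sets of a matroid (of finite rank if f is bounded), with rank function given by rk(A) = max over independent subsets B ⊆ A of |B|. -/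
/-! If `A` is independent and `insert x A` is not, a violating subset `A'` must contain `x`, and
`A'.erase x ⊆ A` is independent; integrality forces `f A' = f (A'.erase x)`, so `x` adds nothing
to `A'.erase x`, and by submodularity nothing to `A` either. If no element of `B` could augment
`A`, then all of `B` adds nothing to `A`, whence `|B| ≤ f B ≤ f (A ∪ B) ≤ f A ≤ |A|`, the last
step because increments are at most one. -/

namespace SubmodularMatroid

open Finset

variable {E : Type*} {f : Finset E → ℤ}

def IsIndep (f : Finset E → ℤ) (A : Finset E) : Prop :=
  ∀ A' ⊆ A, (A'.card : ℤ) ≤ f A'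

theorem isIndep_empty (hzero : f ∅ = 0) : IsIndep f ∅ := fun A' h => by
  simp [subset_empty.mp h, hzero]

theorem IsIndep.subset {A B : Finset E} (hA : IsIndep f A) (hBA : B ⊆ A) : IsIndep f B :=
  fun B' h => hA B' (h.trans hBA)

theorem IsIndep.card_le {A : Finset E} (hA : IsIndep f A) : (A.card : ℤ) ≤ f A :=
  hA A subset_rfl

theorem exists_isIndep_forall_card_le (hzero : f ∅ = 0) (A : Finset E) :
    ∃ B ⊆ A, IsIndep f B ∧ ∀ C ⊆ A, IsIndep f C → C.card ≤ B.card := by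
  classical
  obtain ⟨B, hB, hmax⟩ := (A.powerset.filter (IsIndep f)).exists_max_image card
    ⟨∅, by simp [isIndep_empty hzero]⟩
  simp only [mem_filter, mem_powerset] at hB hmax
  exact ⟨B, hB.1, hB.2, fun C hC hCi => hmax C ⟨hC, hCi⟩⟩

variable [DecidableEq E]

theorem le_card_of_insert_le_add_one (hzero : f ∅ = 0)
    (hinc : ∀ A x, x ∉ A → f (insert x A) ≤ f A + 1) (S : Finset E) : f S ≤ S.card := by
  induction S using Finset.induction_on with
  | empty => simp [hzero]
  | @insert a s ha ih =>
    rw [card_insert_of_notMem ha]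
    push_cast
    linarith [hinc s a ha]

section Submodular

variable (hmono : Monotone f) (hsub : ∀ A B, f (A ∪ B) + f (A ∩ B) ≤ f A + f B)
include hmono hsub

theorem insert_le_of_subset {C D : Finset E} {x : E} (hCD : C ⊆ D)
    (h : f (insert x C) ≤ f C) : f (insert x D) ≤ f D := by
  have hsubCD := hsub (insert x C) D
  rw [insert_union, union_eq_right.mpr hCD] at hsubCD
  have hmonoC := hmono (subset_inter (subset_insert x C) hCD)
  linarith

theorem union_le_of_forall_insert_le {C : Finset E} (T : Finset E)
    (h : ∀ x ∈ T, f (insert x C) ≤ f C) : f (C ∪ T) ≤ f C := by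
  induction T using Finset.induction_on with
  | empty => simp
  | @insert a s _ ih =>
    have hs := ih fun x hx => h x (mem_insert_of_mem hx)
    have ha : f (insert a (C ∪ s)) ≤ f (C ∪ s) :=
      insert_le_of_subset hmono hsub subset_union_left (h a (mem_insert_self a s))
    rw [union_insert]
    linarith

theorem insert_le_of_not_isIndep_insert {A : Finset E} {x : E} (hA : IsIndep f A)
    (hx : ¬IsIndep f (insert x A)) : f (insert x A) ≤ f A := by
  obtain ⟨A', hA'sub, hA'bad⟩ : ∃ A' ⊆ insert x A, f A' < A'.card := by
    simpa [IsIndep] using hx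
  have hxA' : x ∈ A' := by
    by_contra hxA'
    exact hA'bad.not_ge (hA A' ((subset_insert_iff_of_notMem hxA').mp hA'sub))
  have hC : A'.erase x ⊆ A := subset_insert_iff.mp hA'sub
  apply insert_le_of_subset hmono hsub hC
  have hCindep := hA _ hC
  rw [← card_erase_add_one hxA'] at hA'bad
  rw [insert_erase hxA']
  push_cast at hA'bad
  omega

theorem exists_insert_isIndep (hzero : f ∅ = 0)
    (hinc : ∀ A x, x ∉ A → f (insert x A) ≤ f A + 1) {A B : Finset E}
    (hA : IsIndep f A) (hB : IsIndep f B) (hcard : A.card < B.card) :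
    ∃ x ∈ B, x ∉ A ∧ IsIndep f (insert x A) := by
  by_contra! hcon
  have hspan : ∀ x ∈ B, f (insert x A) ≤ f A := fun x hxB => by
    by_cases hxA : x ∈ A
    · rw [insert_eq_of_mem hxA]
    · exact insert_le_of_not_isIndep_insert hmono hsub hA (hcon x hxB hxA)
  have : (B.card : ℤ) ≤ A.card :=
    calc (B.card : ℤ) ≤ f B := hB.card_le
      _ ≤ f (A ∪ B) := hmono subset_union_right
      _ ≤ f A := union_le_of_forall_insert_le hmono hsub B hspan
      _ ≤ A.card := le_card_of_insert_le_add_one hzero hinc A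
  omega

end Submodular

end SubmodularMatroid

open SubmodularMatroid in
theorem submodular_gives_matroid_general {E : Type*} [DecidableEq E] (f : Finset E → ℤ)
    (hzero : f ∅ = 0)
    (hmono : ∀ A B : Finset E, A ⊆ B → f A ≤ f B)
    (hsub : ∀ A B : Finset E, f (A ∪ B) + f (A ∩ B) ≤ f A + f B)
    (hunit : ∀ (A : Finset E) (x : E), x ∉ A → f (insert x A) - f A = 0 ∨
      f (insert x A) - f A = 1) :
    -- the independence system
    (∀ A' : Finset E, A' ⊆ (∅ : Finset E) → (A'.card : ℤ) ≤ f A') ∧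
    (∀ A B : Finset E, B ⊆ A → (∀ A' ⊆ A, (A'.card : ℤ) ≤ f A') →
      (∀ B' ⊆ B, (B'.card : ℤ) ≤ f B')) ∧
    -- augmentation
    (∀ A B : Finset E, (∀ A' ⊆ A, (A'.card : ℤ) ≤ f A') →
      (∀ B' ⊆ B, (B'.card : ℤ) ≤ f B') → A.card < B.card →
      ∃ x ∈ B, x ∉ A ∧ ∀ A' ⊆ insert x A, (A'.card : ℤ) ≤ f A') ∧
    -- the rank function: every independent set extends to a maximum one inside any set,
    -- and the rank is the maximum cardinality of an independent subset
    (∀ A : Finset E, ∃ B ⊆ A, (∀ B' ⊆ B, (B'.card : ℤ) ≤ f B') ∧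
      ∀ C ⊆ A, (∀ C' ⊆ C, (C'.card : ℤ) ≤ f C') → C.card ≤ B.card) ∧
    -- finite rank when `f` is bounded
    (∀ M : ℤ, (∀ A, f A ≤ M) → ∀ A : Finset E,
      (∀ A' ⊆ A, (A'.card : ℤ) ≤ f A') → (A.card : ℤ) ≤ M) := by
  have hmono' : Monotone f := fun A B h => hmono A B h
  have hinc : ∀ A x, x ∉ A → f (insert x A) ≤ f A + 1 := fun A x hx => by
    rcases hunit A x hx with h | h <;> omega
  exact ⟨isIndep_empty hzero, fun A B hBA hA => IsIndep.subset hA hBA,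
    fun A B hA hB => exists_insert_isIndep hmono' hsub hzero hinc hA hB,
    exists_isIndep_forall_card_le hzero, fun M hM A hA => (IsIndep.card_le hA).trans (hM A)⟩

/-- **Theorem (Edmonds–Rota; Pym–Perfect).**  Let `E` be a (possibly infinite) set and
`f` a non-negative, monotone, submodular, integer-valued function on finite subsets of
`E` with `f ∅ = 0` and unit increments.  Then the finite sets `A` with `|A'| ≤ f A'` for
all `A' ⊆ A` are the independent sets of a matroid: they contain `∅`, are closed under
taking subsets, and satisfy the augmentation axiom; the associated rank function is
`rk A = max {|B| : B ⊆ A independent}`, and if `f` is bounded the matroid has finite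
rank. -/
theorem submodular_gives_matroid {E : Type*} [DecidableEq E] (f : Finset E → ℤ)
    (hnonneg : ∀ A, 0 ≤ f A)
    (hzero : f ∅ = 0)
    (hmono : ∀ A B : Finset E, A ⊆ B → f A ≤ f B)
    (hsub : ∀ A B : Finset E, f (A ∪ B) + f (A ∩ B) ≤ f A + f B)
    (hunit : ∀ (A : Finset E) (x : E), x ∉ A → f (insert x A) - f A = 0 ∨
      f (insert x A) - f A = 1) :
    -- the independence system
    (∀ A' : Finset E, A' ⊆ (∅ : Finset E) → (A'.card : ℤ) ≤ f A') ∧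
    (∀ A B : Finset E, B ⊆ A → (∀ A' ⊆ A, (A'.card : ℤ) ≤ f A') →
      (∀ B' ⊆ B, (B'.card : ℤ) ≤ f B')) ∧
    -- augmentation
    (∀ A B : Finset E, (∀ A' ⊆ A, (A'.card : ℤ) ≤ f A') →
      (∀ B' ⊆ B, (B'.card : ℤ) ≤ f B') → A.card < B.card →
      ∃ x ∈ B, x ∉ A ∧ ∀ A' ⊆ insert x A, (A'.card : ℤ) ≤ f A') ∧
    -- the rank function: every independent set extends to a maximum one inside any set,
    -- and the rank is the maximum cardinality of an independent subset
    (∀ A : Finset E, ∃ B ⊆ A, (∀ B' ⊆ B, (B'.card : ℤ) ≤ f B') ∧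
      ∀ C ⊆ A, (∀ C' ⊆ C, (C'.card : ℤ) ≤ f C') → C.card ≤ B.card) ∧
    -- finite rank when `f` is bounded
    (∀ M : ℤ, (∀ A, f A ≤ M) → ∀ A : Finset E,
      (∀ A' ⊆ A, (A'.card : ℤ) ≤ f A') → (A.card : ℤ) ≤ M) :=
  submodular_gives_matroid_general f hzero hmono hsub hunit
end
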